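/- Let n jobs have processing times a_i, b_i ∈ ℕ with a_i ≤ b_i for all i. If the jobs are indexed so that a_1 ≤ a_2 ≤ … ≤ a_n (the SPT order on the first machine), then for every permutation σ of {1,…,n}, the makespan of the SPT sequence is less than or equal to the makespan of the sequence ordered by σ: max_{1 ≤ k ≤ n}( ∑_{i=1}^{k} a_i + ∑_{j=k}^{n} b_j ) ≤ max_{1 ≤ k ≤ n}( ∑_{i=1}^{k} a_{σ(i)} + ∑_{j=k}^{n} b_{σ(j)} ). -/

import Mathlib

/-!
Fix a job `k` in SPT order and let `p` be the first position at which `σ` schedules a job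
`≥ k`. Every job before position `p` is `< k`, so the critical path of `σ` through `p`
processes all jobs `≥ k` on the second machine, each job `< k` on one of the two machines,
and the job `σ p ≥ k` once more on the first. Since `a ≤ b` and `a` is monotone, this path
is at least as long as the SPT critical path through `k`.
-/

open Finset

theorem sum_ite_le_sum_ite_of_imp {α M : Type*} [AddCommMonoid M] [PartialOrder M]
    [IsOrderedAddMonoid M] {P Q : α → Prop} [DecidablePred P] [DecidablePred Q]
    {f g : α → M} (hfg : f ≤ g) (hPQ : ∀ j, P j → Q j) (s : Finset α) :
    ∑ j ∈ s, (if Q j then f j else g j) ≤ ∑ j ∈ s, if P j then f j else g j := by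
  refine sum_le_sum fun j _ => ?_
  by_cases hP : P j
  · simp [hP, hPQ j hP]
  · split_ifs <;> simp [hfg j]

variable {ι M : Type*} [Fintype ι] [LinearOrder ι] [AddCommMonoid M]

theorem sum_le_add_sum_ge_eq_add_sum_ite (a b : ι → M) (k : ι) :
    ∑ i with i ≤ k, a i + ∑ j with k ≤ j, b j = a k + ∑ j, if j < k then a j else b j := by
  have hle : ({i | i ≤ k} : Finset ι) = cons k {i | i < k} (by simp) := by
    ext i
    simp [le_iff_lt_or_eq, or_comm]
  rw [hle, sum_cons, sum_ite, add_assoc]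
  simp only [not_lt]

variable [LinearOrder M] [IsOrderedAddMonoid M] [OrderBot M]

def makespan (a b : ι → M) : M :=
  univ.sup fun k => ∑ i with i ≤ k, a i + ∑ j with k ≤ j, b j

theorem makespan_le_makespan_comp_perm {a b : ι → M} (hab : a ≤ b) (hmono : Monotone a)
    (σ : Equiv.Perm ι) : makespan a b ≤ makespan (a ∘ σ) (b ∘ σ) := by
  refine Finset.sup_le fun k _ => ?_
  obtain ⟨p, hkp, hfirst⟩ := wellFounded_lt.has_min {q | k ≤ σ q} ⟨σ.symm k, by simp⟩
  refine le_trans ?_ (le_sup (mem_univ p))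
  simp only [sum_le_add_sum_ge_eq_add_sum_ite, Function.comp_apply]
  rw [← Equiv.sum_comp σ (fun j => if j < k then a j else b j)]
  gcongr ?_ + ?_
  · exact hmono hkp
  · exact sum_ite_le_sum_ite_of_imp (fun j => hab (σ j))
      (fun j hjp => not_le.mp fun hkj => hfirst j hkj hjp) univ

/-- SPT optimality: if `a i ≤ b i` for all jobs and the jobs
are indexed so that `a` is nondecreasing (SPT order on the first machine), then
for every permutation `σ` the makespan of the SPT sequence is at most the
makespan of the sequence ordered by `σ`, where the makespan of an order is
`max_{k} (∑_{i ≤ k} a_{σ i} + ∑_{j ≥ k} b_{σ j})`. -/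
theorem spt_optimal (n : ℕ) (a b : Fin n → ℕ)
    (hab : ∀ i, a i ≤ b i) (hmono : Monotone a) (σ : Equiv.Perm (Fin n)) :
    (Finset.univ : Finset (Fin n)).sup
        (fun k => ∑ i ∈ Finset.univ.filter (fun i => i ≤ k), a i
                + ∑ j ∈ Finset.univ.filter (fun j => k ≤ j), b j)
    ≤ (Finset.univ : Finset (Fin n)).sup
        (fun k => ∑ i ∈ Finset.univ.filter (fun i => i ≤ k), a (σ i)
                + ∑ j ∈ Finset.univ.filter (fun j => k ≤ j), b (σ j)) :=
  makespan_le_makespan_comp_perm hab hmono σ
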